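/- arXiv:1901.07011 — 3 statements merged into one kernel-verified Lean document; each statement's English description precedes it below -/
import Mathlib

section
/- For x > 0 and c > 1/2, the inverse Mellin transform along the vertical line Re t = c satisfies (1/(2πi)) ∫_{c-i∞}^{c+i∞} x^{-t} Γ(t) ζ(2t) dt = ∑_{n=1}^∞ e^{-n² x}. -/
/-!
Let `ψ(t) = ∑_{n ≥ 1} e^{-n² t}`. Integrating termwise, `∫₀^∞ t^{s-1} ψ(t) dt = Γ(s) ∑ n^{-2s}
= Γ(s) ζ(2s)` for `re s > 1/2`; the interchange is justified because the integrals of the norms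
sum to `Γ(c) ∑ n^{-2c} < ∞`. The same series bounds `‖Γ(s) ζ(2s)‖` by `‖Γ(s)‖ ∑ n^{-2c}`, and
`Γ(s) = Γ(s + 2) / (s (s + 1))` gives `‖Γ(c + iy)‖ ≤ Γ(c + 2) / (c² + y²)`, so the transform is
integrable on the line `re s = c`. Mellin inversion at the continuity point `x` recovers `ψ(x)`.
-/

open Complex MeasureTheory Set Filter

section

variable {α E ι : Type*} [MeasurableSpace α] {μ : Measure α} [NormedAddCommGroup E]
  [CompleteSpace E] [Countable ι]

theorem integrable_tsum_of_summable_integral_norm {F : ι → α → E}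
    (hF_int : ∀ i, Integrable (F i) μ) (hF_sum : Summable fun i ↦ ∫ a, ‖F i a‖ ∂μ) :
    Integrable (fun a ↦ ∑' i, F i a) μ := by
  have h_lint : ∫⁻ a, ∑' i, ‖F i a‖ₑ ∂μ ≠ ⊤ := by
    rw [lintegral_tsum fun i ↦ (hF_int i).aestronglyMeasurable.enorm]
    simp_rw [← ofReal_integral_norm_eq_lintegral_enorm (hF_int _)]
    rw [← ENNReal.ofReal_tsum_of_nonneg (fun i ↦ integral_nonneg fun _ ↦ norm_nonneg _) hF_sum]
    exact ENNReal.ofReal_ne_top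
  have h_summable : ∀ᵐ a ∂μ, Summable fun i ↦ F i a := by
    filter_upwards [ae_lt_top' (AEMeasurable.tsum fun i ↦ (hF_int i).aestronglyMeasurable.enorm)
      h_lint] with a ha
    exact .of_norm (ENNReal.tsum_coe_ne_top_iff_summable_coe.1 ha.ne)
  refine ⟨aestronglyMeasurable_of_tendsto_ae atTop
    (fun s ↦ Finset.aestronglyMeasurable_fun_sum s fun i _ ↦ (hF_int i).aestronglyMeasurable)
    (h_summable.mono fun a ha ↦ ha.hasSum), ?_⟩
  rw [hasFiniteIntegral_iff_enorm]
  exact (lintegral_mono fun a ↦ enorm_tsum_le_tsum_enorm).trans_lt h_lint.lt_top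

end

lemma norm_Gamma_le_Gamma_re {s : ℂ} (hs : 0 < s.re) : ‖Gamma s‖ ≤ Real.Gamma s.re := by
  rw [Gamma_eq_integral hs, Real.Gamma_eq_integral hs, GammaIntegral]
  refine (norm_integral_le_integral_norm _).trans_eq <| setIntegral_congr_fun measurableSet_Ioi
    fun t ht ↦ ?_
  rw [norm_mul, norm_real, Real.norm_of_nonneg (Real.exp_pos _).le, norm_cpow_eq_rpow_re_of_pos ht,
    sub_re, one_re]

lemma norm_Gamma_le_div_norm_sq {s : ℂ} (hs : 0 < s.re) :
    ‖Gamma s‖ ≤ Real.Gamma (s.re + 2) / ‖s‖ ^ 2 := by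
  have hs0 : s ≠ 0 := fun h ↦ by simp [h] at hs
  have hs1 : s + 1 ≠ 0 := fun h ↦ by
    have := congrArg re h
    simp only [add_re, one_re, zero_re] at this
    linarith
  have h_rec : Gamma (s + 2) = (s + 1) * s * Gamma s := by
    rw [show s + 2 = s + 1 + 1 by ring, Gamma_add_one _ hs1, Gamma_add_one _ hs0, mul_assoc]
  have h_le : ‖s‖ ≤ ‖s + 1‖ := by
    rw [norm_def, norm_def, Real.sqrt_le_sqrt_iff (normSq_nonneg _), normSq_apply, normSq_apply]
    simp only [add_re, one_re, add_im, one_im, add_zero]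
    nlinarith
  have h_pos : 0 < ‖s‖ := norm_pos_iff.2 hs0
  rw [le_div_iff₀ (by positivity)]
  calc ‖Gamma s‖ * ‖s‖ ^ 2 = ‖s‖ * ‖s‖ * ‖Gamma s‖ := by ring
    _ ≤ ‖s + 1‖ * ‖s‖ * ‖Gamma s‖ := by gcongr
    _ = ‖Gamma (s + 2)‖ := by rw [h_rec, norm_mul, norm_mul]
    _ ≤ Real.Gamma (s.re + 2) := by
        simpa using norm_Gamma_le_Gamma_re (s := s + 2) (by simp only [add_re, re_ofNat]; linarith)

lemma integrable_inv_sq_add_sq {c : ℝ} (hc : c ≠ 0) :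
    Integrable fun y : ℝ ↦ (c ^ 2 + y ^ 2)⁻¹ := by
  refine ((integrable_inv_one_add_sq.comp_div hc).const_mul (c ^ 2)⁻¹).congr
    (ae_of_all _ fun y ↦ ?_)
  field_simp

lemma summable_one_div_sq_rpow {c : ℝ} (hc : 1 / 2 < c) :
    Summable fun n : ℕ+ ↦ 1 / ((n : ℝ) ^ 2) ^ c := by
  refine ((Real.summable_one_div_nat_rpow.2 (by linarith : 1 < 2 * c)).comp_injective
    PNat.coe_injective).congr fun n ↦ ?_
  rw [Function.comp_apply, ← Real.rpow_natCast, ← Real.rpow_mul (Nat.cast_nonneg _)]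
  norm_num

lemma differentiableAt_Gamma_mul_riemannZeta_two_mul {s : ℂ} (hs : 1 / 2 < s.re) :
    DifferentiableAt ℂ (fun s ↦ Gamma s * riemannZeta (2 * s)) s := by
  refine .mul (differentiableAt_Gamma _ fun m h ↦ ?_) ((differentiableAt_riemannZeta ?_).comp s
    (differentiableAt_id.const_mul 2))
  · have := congrArg re h
    simp only [neg_re, natCast_re] at this
    linarith [(m.cast_nonneg : (0 : ℝ) ≤ m)]
  · intro h
    have := congrArg re h
    simp only [mul_re, re_ofNat, im_ofNat, zero_mul, sub_zero, one_re] at this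
    linarith

noncomputable def expNegSqSum (t : ℝ) : ℂ := ∑' n : ℕ+, (Real.exp (-(n : ℝ) ^ 2 * t) : ℂ)

lemma summable_exp_neg_sq_mul {t : ℝ} (ht : 0 < t) :
    Summable fun n : ℕ+ ↦ Real.exp (-(n : ℝ) ^ 2 * t) := by
  have := Real.summable_exp_nat_mul_of_ge (neg_lt_zero.2 ht) (f := fun n : ℕ ↦ (n : ℝ) ^ 2)
    fun n ↦ mod_cast Nat.le_self_pow two_ne_zero n
  refine (this.comp_injective PNat.coe_injective).congr fun n ↦ ?_
  simp [mul_comm]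

lemma continuousAt_expNegSqSum {x : ℝ} (hx : 0 < x) : ContinuousAt expNegSqSum x := by
  refine (continuousOn_tsum (fun n ↦ by fun_prop) (summable_exp_neg_sq_mul (half_pos hx))
    fun n t (ht : x / 2 < t) ↦ ?_).continuousAt (Ioi_mem_nhds (half_lt_self hx))
  rw [norm_real, Real.norm_of_nonneg (Real.exp_pos _).le, Real.exp_le_exp]
  nlinarith [sq_nonneg (n : ℝ)]

lemma mellinConvergent_expNegSqSum {c : ℝ} (hc : 1 / 2 < c) :
    MellinConvergent expNegSqSum c := by
  have hc0 : 0 < c := by linarith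
  let F (n : ℕ+) (t : ℝ) : ℂ := (t : ℂ) ^ ((c : ℂ) - 1) * Real.exp (-(n : ℝ) ^ 2 * t)
  have h_norm (n : ℕ+) : ∀ t ∈ Ioi (0 : ℝ),
      ‖F n t‖ = t ^ (c - 1) * Real.exp (-(n : ℝ) ^ 2 * t ^ (1 : ℝ)) := fun t ht ↦ by
    rw [norm_mul, norm_cpow_eq_rpow_re_of_pos ht, norm_real,
      Real.norm_of_nonneg (Real.exp_pos _).le, Real.rpow_one]
    simp
  have h_int (n : ℕ+) : IntegrableOn (F n) (Ioi 0) :=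
    (integrableOn_rpow_mul_exp_neg_mul_rpow (by linarith) one_pos (by positivity)).mono'
      (by fun_prop) ((ae_restrict_iff' measurableSet_Ioi).2 (ae_of_all _ fun t ht ↦
        (h_norm n t ht).le))
  have h_integral (n : ℕ+) :
      ∫ t in Ioi 0, ‖F n t‖ = Real.Gamma c * (1 / ((n : ℝ) ^ 2) ^ c) := by
    rw [setIntegral_congr_fun measurableSet_Ioi (h_norm n)]
    simp only [Real.rpow_one, neg_mul]
    rw [Real.integral_rpow_mul_exp_neg_mul_Ioi hc0 (by positivity), mul_comm,
      Real.div_rpow zero_le_one (by positivity), Real.one_rpow]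
  have := integrable_tsum_of_summable_integral_norm h_int
    (by simpa only [h_integral] using (summable_one_div_sq_rpow hc).mul_left _)
  refine this.congr (ae_of_all _ fun t ↦ ?_)
  simp [F, expNegSqSum, tsum_mul_left]

lemma hasSum_mellin_expNegSqSum {s : ℂ} (hs : 1 / 2 < s.re) :
    HasSum (fun n : ℕ+ ↦ Gamma s / (((n : ℝ) ^ 2 : ℝ) : ℂ) ^ s) (mellin expNegSqSum s) := by
  have := hasSum_mellin (a := fun _ ↦ 1) (p := fun n : ℕ+ ↦ (n : ℝ) ^ 2) (F := expNegSqSum)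
    (fun n ↦ .inr (by positivity)) (by linarith) (fun t ht ↦ ?_) ?_
  · simpa only [mul_one] using this
  · simpa only [one_mul, expNegSqSum] using (summable_ofReal.2 (summable_exp_neg_sq_mul ht)).hasSum
  · simpa only [norm_one] using summable_one_div_sq_rpow hs

lemma mellin_expNegSqSum {s : ℂ} (hs : 1 / 2 < s.re) :
    mellin expNegSqSum s = Gamma s * riemannZeta (2 * s) := by
  have hs0 : s ≠ 0 := fun h ↦ by rw [h, zero_re] at hs; linarith
  rw [← (hasSum_mellin_expNegSqSum hs).tsum_eq,
    zeta_eq_tsum_one_div_nat_cpow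
      (by simp only [mul_re, re_ofNat, im_ofNat, zero_mul, sub_zero]; linarith), ← tsum_mul_left,
    -- the `n = 0` term of the zeta series is the junk value `1 / 0 ^ (2 * s) = 0`
    ← tsum_pnat_eq_tsum_of_eq_zero (by simp [hs0])]
  refine tsum_congr fun n ↦ ?_
  have h_pow : ((n : ℕ) : ℂ) ^ (2 * s) = (((n : ℕ) : ℂ) ^ 2) ^ s := by
    exact_mod_cast natCast_cpow_natCast_mul n 2 s
  push_cast
  rw [h_pow, mul_one_div]

lemma norm_mellin_expNegSqSum_le {s : ℂ} (hs : 1 / 2 < s.re) :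
    ‖mellin expNegSqSum s‖ ≤ ‖Gamma s‖ * ∑' n : ℕ+, 1 / ((n : ℝ) ^ 2) ^ s.re :=
  (hasSum_mellin_expNegSqSum hs).norm_le_of_bounded
    ((summable_one_div_sq_rpow hs).hasSum.mul_left _) fun n ↦ by
      rw [norm_div, norm_cpow_eq_rpow_re_of_pos (by positivity), mul_one_div]

lemma verticalIntegrable_mellin_expNegSqSum {c : ℝ} (hc : 1 / 2 < c) :
    VerticalIntegrable (mellin expNegSqSum) c := by
  have hc0 : 0 < c := by linarith
  have h_re (y : ℝ) : ((c : ℂ) + y * I).re = c := by simp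
  have h_eq : (fun y : ℝ ↦ mellin expNegSqSum (c + y * I)) =
      (fun s ↦ Gamma s * riemannZeta (2 * s)) ∘ fun y : ℝ ↦ (c : ℂ) + y * I :=
    funext fun y ↦ mellin_expNegSqSum (by rwa [h_re])
  have h_cont : Continuous fun y : ℝ ↦ mellin expNegSqSum (c + y * I) := by
    rw [h_eq, continuous_iff_continuousAt]
    exact fun y ↦ (differentiableAt_Gamma_mul_riemannZeta_two_mul (by rwa [h_re])).continuousAt.comp
      (by fun_prop)
  set Z := ∑' n : ℕ+, 1 / ((n : ℝ) ^ 2) ^ c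
  refine ((integrable_inv_sq_add_sq hc0.ne').const_mul (Real.Gamma (c + 2) * Z)).mono'
    h_cont.aestronglyMeasurable (ae_of_all _ fun y ↦ ?_)
  have h_norm_sq : ‖(c : ℂ) + y * I‖ ^ 2 = c ^ 2 + y ^ 2 := by
    rw [Complex.sq_norm, normSq_add_mul_I]
  calc ‖mellin expNegSqSum (c + y * I)‖ ≤ ‖Gamma (c + y * I)‖ * Z := by
        simpa only [h_re] using norm_mellin_expNegSqSum_le (s := c + y * I) (by rwa [h_re])
    _ ≤ Real.Gamma (c + 2) / (c ^ 2 + y ^ 2) * Z := by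
        gcongr
        simpa only [h_re, h_norm_sq] using norm_Gamma_le_div_norm_sq (s := c + y * I)
            (by rwa [h_re])
    _ = Real.Gamma (c + 2) * Z * (c ^ 2 + y ^ 2)⁻¹ := by ring

theorem inverse_mellin_gamma_zeta (x c : ℝ) (hx : 0 < x) (hc : 1 / 2 < c) :
    (1 / (2 * Real.pi) : ℂ) *
        ∫ y : ℝ, (x : ℂ) ^ (-(c + y * I)) * Complex.Gamma (c + y * I) *
          riemannZeta (2 * (c + y * I)) =
      ∑' n : ℕ+, (Real.exp (-(n : ℝ) ^ 2 * x) : ℂ) := by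
  have h_inv := mellinInv_mellin_eq c expNegSqSum hx (mellinConvergent_expNegSqSum hc)
    (verticalIntegrable_mellin_expNegSqSum hc) (continuousAt_expNegSqSum hx)
  rw [mellinInv, real_smul] at h_inv
  push_cast at h_inv
  rw [← expNegSqSum, ← h_inv]
  congr 1
  refine integral_congr_ae (ae_of_all _ fun y ↦ ?_)
  dsimp only
  rw [smul_eq_mul, mellin_expNegSqSum (by simpa using hc), mul_assoc]
end

section
/- For all real τ, Ξ(τ) = 1/2 − (τ² + 1/4) ∫_1^∞ t^{-3/4} cos((τ/2) log t) ψ(t) dt, where ψ(t) = ∑_{n=1}^∞ e^{-π n² t} and Ξ(τ) = ξ(1/2 + iτ). -/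
open Complex MeasureTheory Set

noncomputable def xi (s : ℂ) : ℂ :=
  (s - 1) * (Real.pi : ℂ) ^ (-s / 2) * Complex.Gamma (1 + s / 2) * riemannZeta s

noncomputable def psi (t : ℝ) : ℝ := ∑' n : ℕ+, Real.exp (-Real.pi * n ^ 2 * t)

/-!
Riemann's argument. The theta functional equation `θ(1/t) = √t θ(t)`, with `θ = 1 + 2ψ`,
folds the part over `(0, 1)` of the Mellin integral defining `Λ₀` onto `(1, ∞)` via `t ↦ 1/t`,
giving `Λ₀(s) = ∫₁^∞ (t^(s/2 - 1) + t^((1-s)/2 - 1)) ψ(t) dt` for every `s`.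
Since `Γ(1 + s/2) = (s/2) Γ(s/2)` and `Λ = Λ₀ - 1/s - 1/(1-s)`, we get
`ξ(s) = 1/2 - s(1-s)/2 · Λ₀(s)`. On the critical line `s = 1/2 + iτ` the two powers of `t` are
complex conjugates summing to `2 t^(-3/4) cos((τ/2) log t)`, and `s(1-s) = τ² + 1/4`.
-/

section

variable {E : Type*} [NormedAddCommGroup E] [NormedSpace ℂ E]

lemma mellinConvergent_indicator_Ioi_one {f : ℝ → E} {s : ℂ}
    (hf : IntegrableOn (fun t : ℝ => (t : ℂ) ^ (s - 1) • f t) (Ioi 1)) :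
    MellinConvergent ((Ioi 1).indicator f) s := by
  rw [MellinConvergent, ← indicator_smul (Ioi 1) (fun t : ℝ => (t : ℂ) ^ (s - 1)) f]
  exact (hf.integrable_indicator measurableSet_Ioi).integrableOn

lemma mellin_indicator_Ioi_one (f : ℝ → E) (s : ℂ) :
    mellin ((Ioi 1).indicator f) s = ∫ t : ℝ in Ioi 1, (t : ℂ) ^ (s - 1) • f t := by
  rw [mellin, ← indicator_smul (Ioi 1) (fun t : ℝ => (t : ℂ) ^ (s - 1)) f,
    setIntegral_indicator measurableSet_Ioi,
    inter_eq_right.mpr (Ioi_subset_Ioi zero_le_one)]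

namespace WeakFEPair

variable (P : WeakFEPair E)

lemma f_modif_of_one_lt {t : ℝ} (ht : 1 < t) : P.f_modif t = P.f t - P.f₀ := by
  simp [f_modif, ht, notMem_Ioo_of_ge ht.le]

lemma f_modif_eq_indicator_add {t : ℝ} (ht : 0 < t) :
    P.f_modif t = (Ioi 1).indicator (P.f · - P.f₀) t +
      (P.ε * ((t ^ (-P.k) : ℝ) : ℂ)) • (Ioi 1).indicator (P.g · - P.g₀) t⁻¹ := by
  rcases lt_trichotomy t 1 with h | rfl | h
  · have hfeq := P.h_feq t⁻¹ (inv_pos.mpr ht)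
    rw [one_div, inv_inv, Real.inv_rpow ht.le, ← Real.rpow_neg ht.le] at hfeq
    simp [f_modif, h, ht, (one_lt_inv₀ ht).mpr h, h.not_gt, hfeq, smul_sub]
  · simp [f_modif]
  · simp [f_modif_of_one_lt P h, h, (inv_lt_one₀ ht).mpr h |>.le]

lemma integrableOn_Ioi_one [CompleteSpace E] (s : ℂ) :
    IntegrableOn (fun t : ℝ => (t : ℂ) ^ (s - 1) • (P.f t - P.f₀)) (Ioi 1) :=
  ((P.isStrongFEPair_toStrongFEPair.hasMellin s).1.mono_set
    (Ioi_subset_Ioi zero_le_one)).congr_fun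
      (fun t ht => by simp only [toStrongFEPair, P.f_modif_of_one_lt ht]) measurableSet_Ioi

theorem Λ₀_eq_integral_Ioi_one [CompleteSpace E] (s : ℂ) :
    P.Λ₀ s = (∫ t : ℝ in Ioi 1, (t : ℂ) ^ (s - 1) • (P.f t - P.f₀)) +
      P.ε • ∫ t : ℝ in Ioi 1, (t : ℂ) ^ (P.k - s - 1) • (P.g t - P.g₀) := by
  set F := (Ioi (1 : ℝ)).indicator (P.f · - P.f₀)
  set G := (Ioi (1 : ℝ)).indicator (P.g · - P.g₀)
  have hF : MellinConvergent F s := mellinConvergent_indicator_Ioi_one (P.integrableOn_Ioi_one s)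
  have hrest : mellin (fun t => P.f_modif t - F t) s = P.ε • mellin G (P.k - s) := by
    calc mellin (fun t => P.f_modif t - F t) s
        = mellin (fun t => P.ε • (t : ℂ) ^ (-P.k : ℂ) • G t⁻¹) s :=
          setIntegral_congr_fun measurableSet_Ioi fun t ht => by
            simp only [P.f_modif_eq_indicator_add ht, add_sub_cancel_left, F, G, mul_smul,
              ofReal_cpow (le_of_lt ht), ofReal_neg]
      _ = P.ε • mellin G (P.k - s) := by
          rw [mellin_const_smul, mellin_cpow_smul, mellin_comp_inv, neg_add, neg_neg,
            neg_add_eq_sub]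
  calc P.Λ₀ s = mellin F s + mellin (fun t => P.f_modif t - F t) s := by
        rw [(hasMellin_sub (f := P.f_modif)
          (P.isStrongFEPair_toStrongFEPair.hasMellin s).1 hF).2, Λ₀]
        exact (add_sub_cancel _ _).symm
    _ = _ := by rw [hrest, mellin_indicator_Ioi_one, mellin_indicator_Ioi_one]

end WeakFEPair

end

open HurwitzZeta

lemma cosKernel_zero_eq_one_add_two_mul_psi {t : ℝ} (ht : 0 < t) :
    cosKernel 0 t = 1 + 2 * psi t := by
  have h := (hasSum_nat_cosKernel₀ 0 ht).tsum_eq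
  simp only [mul_zero, zero_mul, Real.cos_zero, mul_one, QuotientAddGroup.mk_zero,
    tsum_mul_left] at h
  rw [psi, tsum_pnat_eq_tsum_succ (f := fun n : ℕ => Real.exp (-Real.pi * n ^ 2 * t))]
  push_cast
  linarith

lemma hurwitzEvenFEPair_zero_f_sub_f₀ {t : ℝ} (ht : 0 < t) :
    (hurwitzEvenFEPair 0).f t - (hurwitzEvenFEPair 0).f₀ = 2 * psi t := by
  simp [hurwitzEvenFEPair, evenKernel_eq_cosKernel_of_zero,
    cosKernel_zero_eq_one_add_two_mul_psi ht]

theorem completedRiemannZeta₀_eq_integral (s : ℂ) :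
    completedRiemannZeta₀ s =
      ∫ t : ℝ in Ioi 1, ((t : ℂ) ^ (s / 2 - 1) + (t : ℂ) ^ ((1 - s) / 2 - 1)) * psi t := by
  set P := hurwitzEvenFEPair 0
  have hPg : P.g = P.f ∧ P.g₀ = P.f₀ := by
    simp [P, hurwitzEvenFEPair, evenKernel_eq_cosKernel_of_zero]
  have hk : (P.k : ℂ) - s / 2 - 1 = (1 - s) / 2 - 1 := by
    simp only [P, hurwitzEvenFEPair]; push_cast; ring
  calc completedRiemannZeta₀ s = P.Λ₀ (s / 2) / 2 := rfl
    _ = (∫ t : ℝ in Ioi 1, ((t : ℂ) ^ (s / 2 - 1) • (P.f t - P.f₀) +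
          (t : ℂ) ^ ((1 - s) / 2 - 1) • (P.f t - P.f₀))) / 2 := by
      rw [P.Λ₀_eq_integral_Ioi_one, hPg.1, hPg.2, show P.ε = 1 from rfl, one_smul,
        ← integral_add (P.integrableOn_Ioi_one _) (P.integrableOn_Ioi_one _), hk]
    _ = _ := by
      rw [← integral_div]
      refine setIntegral_congr_fun measurableSet_Ioi fun t ht => ?_
      rw [hurwitzEvenFEPair_zero_f_sub_f₀ (zero_lt_one.trans ht), smul_eq_mul, smul_eq_mul]
      ring

lemma xi_eq_one_half_sub_mul_completedRiemannZeta₀ {s : ℂ} (hΓ : Gammaℝ s ≠ 0)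
    (hs1 : s ≠ 1) :
    xi s = 1 / 2 - s * (1 - s) / 2 * completedRiemannZeta₀ s := by
  have hs0 : s ≠ 0 := by
    rintro rfl
    exact hΓ (Gammaℝ_eq_zero_iff.mpr ⟨0, by simp⟩)
  have h1s : 1 - s ≠ 0 := sub_ne_zero.mpr (Ne.symm hs1)
  have hGamma : Gamma (1 + s / 2) = s / 2 * Gamma (s / 2) := by
    rw [add_comm, Gamma_add_one _ (div_ne_zero hs0 two_ne_zero)]
  rw [xi, hGamma, riemannZeta_def_of_ne_zero hs0, completedRiemannZeta_eq]
  rw [Gammaℝ] at hΓ ⊢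
  obtain ⟨hπ, hΓ'⟩ := mul_ne_zero_iff.mp hΓ
  field_simp
  ring

lemma ofReal_cpow_add_ofReal_cpow_conj {t : ℝ} (ht : 0 < t) (a b : ℝ) :
    (t : ℂ) ^ ((a : ℂ) + b * I) + (t : ℂ) ^ ((a : ℂ) - b * I) =
      ((2 * t ^ a * Real.cos (b * Real.log t) : ℝ) : ℂ) := by
  have hexp (c : ℂ) : (t : ℂ) ^ c = exp (Real.log t * c) := by
    rw [cpow_def_of_ne_zero (ofReal_ne_zero.mpr ht.ne'), ofReal_log ht.le]
  rw [hexp, hexp, ofReal_mul, ofReal_mul, Real.rpow_def_of_pos ht, ofReal_exp, ofReal_cos,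
    Complex.cos, mul_add, mul_sub, exp_add, exp_sub, ofReal_mul, neg_mul,
    show ((b * Real.log t : ℝ) : ℂ) * I = Real.log t * (b * I) by push_cast; ring, exp_neg]
  push_cast
  ring

theorem Xi_riemann_rep (τ : ℝ) :
    xi (1 / 2 + I * τ) = 1 / 2 - ((τ : ℂ) ^ 2 + 1 / 4) *
      ((∫ t in Ioi (1 : ℝ), t ^ (-(3 : ℝ) / 4) * Real.cos (τ / 2 * Real.log t) * psi t : ℝ) : ℂ) := by
  set s : ℂ := 1 / 2 + I * τ
  have hs_re : 0 < s.re := by simp [s]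
  have hs1 : s ≠ 1 := fun h => by simpa [s] using congrArg re h
  have hprod : s * (1 - s) = (τ : ℂ) ^ 2 + 1 / 4 := by
    linear_combination (-(τ : ℂ) ^ 2) * I_sq
  have hintegrand : ∀ t ∈ Ioi (1 : ℝ),
      ((t : ℂ) ^ (s / 2 - 1) + (t : ℂ) ^ ((1 - s) / 2 - 1)) * psi t =
        ((2 * (t ^ (-(3 : ℝ) / 4) * Real.cos (τ / 2 * Real.log t) * psi t) : ℝ) : ℂ) := by
    intro t ht
    rw [show s / 2 - 1 = ((-(3 : ℝ) / 4 : ℝ) : ℂ) + ((τ / 2 : ℝ) : ℂ) * I by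
        push_cast; ring,
      show (1 - s) / 2 - 1 = ((-(3 : ℝ) / 4 : ℝ) : ℂ) - ((τ / 2 : ℝ) : ℂ) * I by
        push_cast; ring,
      ofReal_cpow_add_ofReal_cpow_conj (zero_lt_one.trans ht)]
    push_cast
    ring
  rw [xi_eq_one_half_sub_mul_completedRiemannZeta₀ (Gammaℝ_ne_zero_of_re_pos hs_re) hs1,
    completedRiemannZeta₀_eq_integral, setIntegral_congr_fun measurableSet_Ioi hintegrand,
    integral_complex_ofReal, integral_const_mul, hprod]
  push_cast
  ring
end

section
/- For real τ, Ξ(τ) = 4 ∫_1^∞ t^{1/4} cos((τ/2) log t) [ t ψ''(t) + (3/2) ψ'(t) ] dt, where ψ(t) = ∑_{n=1}^∞ e^{-π n² t} and Ξ(τ) = ξ(1/2+iτ). -/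
/-!
Write `s = 1/2 + iτ`. Since `t^{1/4} cos((τ/2) log t) = (t^{s/2} + t^{(1-s)/2}) / 2`, the right-hand
side splits into two integrals `∫_1^∞ t^c (t ψ'' + 3/2 ψ') dt` with `c = s/2` and `c = (1-s)/2`.
Integrating by parts twice turns each of them into boundary terms at `t = 1` plus
`-c (1/2 - c) ∫_1^∞ t^{c-1} ψ(t) dt`; as `c (1/2 - c) = s (1-s)/4` for both values of `c`, the
remaining integrals add up to Riemann's representation
`Λ₀(s) = ∫_1^∞ (t^{s/2-1} + t^{(1-s)/2-1}) ψ(t) dt`, obtained from the Mellin transform of the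
modified theta kernel by splitting at `t = 1` and substituting `t ↦ 1/t`. The boundary terms
contribute `-(4ψ'(1) + ψ(1))`, which is `1/2` by differentiating the theta relation
`1 + 2ψ(1/t) = √t (1 + 2ψ(t))` at `t = 1`; this matches `ξ(s) = 1/2 + s (s-1)/2 · Λ₀(s)`.
-/

open Complex MeasureTheory Set

lemma setIntegral_Ioc_zero_one_cpow_smul_eq {E : Type*} [NormedAddCommGroup E] [NormedSpace ℂ E]
    (f : ℝ → E) (s : ℂ) :
    ∫ t in Ioc (0 : ℝ) 1, (t : ℂ) ^ (s - 1) • f t =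
      ∫ t in Ioi (1 : ℝ), (t : ℂ) ^ (-s - 1) • f t⁻¹ := by
  have h := mellin_comp_inv ((Ioc (0 : ℝ) 1).indicator f) (-s)
  rw [neg_neg, mellin, mellin] at h
  simp_rw [← indicator_smul_apply _ (fun t : ℝ => (t : ℂ) ^ (s - 1))] at h
  rw [setIntegral_indicator measurableSet_Ioc, inter_eq_right.mpr Ioc_subset_Ioi_self] at h
  rw [← h, ← integral_Ici_eq_integral_Ioi (x := (1 : ℝ)),
    ← inter_eq_right.mpr (Ici_subset_Ioi.mpr one_pos), ← setIntegral_indicator measurableSet_Ici]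
  refine setIntegral_congr_fun measurableSet_Ioi fun t (ht : 0 < t) => ?_
  by_cases h1 : 1 ≤ t
  · rw [indicator_of_mem (mem_Ici.mpr h1),
      indicator_of_mem (show t⁻¹ ∈ Ioc 0 1 from ⟨inv_pos.mpr ht, inv_le_one_of_one_le₀ h1⟩)]
  · rw [indicator_of_notMem (show t ∉ Ici 1 from h1),
      indicator_of_notMem (show t⁻¹ ∉ Ioc 0 1 from fun h => h1 ((inv_le_one₀ ht).mp h.2)),
      smul_zero]

lemma mellin_eq_integral_Ioi_one_add {E : Type*} [NormedAddCommGroup E] [NormedSpace ℂ E]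
    {f : ℝ → E} {s : ℂ} (hf : MellinConvergent f s) :
    mellin f s = (∫ t in Ioi (1 : ℝ), (t : ℂ) ^ (s - 1) • f t) +
      ∫ t in Ioi (1 : ℝ), (t : ℂ) ^ (-s - 1) • f t⁻¹ := by
  rw [mellin, ← Ioc_union_Ioi_eq_Ioi zero_le_one, setIntegral_union Ioc_disjoint_Ioi_same
    measurableSet_Ioi (hf.mono_set Ioc_subset_Ioi_self) (hf.mono_set (Ioi_subset_Ioi zero_le_one)),
    setIntegral_Ioc_zero_one_cpow_smul_eq, add_comm]

namespace RiemannXi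

open Real Filter Topology Asymptotics

noncomputable def psiDeriv (k : ℕ) (t : ℝ) : ℝ :=
  ∑' n : ℕ+, (-(π * (n : ℝ) ^ 2)) ^ k * rexp (-π * (n : ℝ) ^ 2 * t)

lemma psiDeriv_zero : psiDeriv 0 = psi := by
  funext t
  simp [psiDeriv, psi]

lemma summable_pow_mul_exp_neg_pi_mul_sq (k : ℕ) {t : ℝ} (ht : 0 < t) :
    Summable fun n : ℕ+ => (π * (n : ℝ) ^ 2) ^ k * rexp (-π * (n : ℝ) ^ 2 * t) := by
  have hgeom := (summable_pow_mul_exp_neg_nat_mul (2 * k) (mul_pos pi_pos ht)).mul_left (π ^ k)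
  refine (hgeom.comp_injective PNat.coe_injective).of_nonneg_of_le (fun n => by positivity)
    fun n => ?_
  have hn : (n : ℝ) ≤ (n : ℝ) ^ 2 := by
    nlinarith [show (1 : ℝ) ≤ n by exact_mod_cast n.pos]
  calc (π * (n : ℝ) ^ 2) ^ k * rexp (-π * (n : ℝ) ^ 2 * t)
      = π ^ k * ((n : ℝ) ^ (2 * k) * rexp (-π * (n : ℝ) ^ 2 * t)) := by ring
    _ ≤ π ^ k * ((n : ℝ) ^ (2 * k) * rexp (-(π * t) * n)) := by
        gcongr _ * (_ * ?_)
        exact exp_le_exp.mpr (by nlinarith [mul_le_mul_of_nonneg_left hn (mul_pos pi_pos ht).le])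

lemma norm_psiDeriv_term (k : ℕ) (n : ℕ+) (t : ℝ) :
    ‖(-(π * (n : ℝ) ^ 2)) ^ k * rexp (-π * (n : ℝ) ^ 2 * t)‖ =
      (π * (n : ℝ) ^ 2) ^ k * rexp (-π * (n : ℝ) ^ 2 * t) := by
  rw [norm_mul, norm_pow, norm_neg, norm_of_nonneg (by positivity), norm_of_nonneg (exp_pos _).le]

lemma summable_norm_psiDeriv_term (k : ℕ) {t : ℝ} (ht : 0 < t) :
    Summable fun n : ℕ+ => ‖(-(π * (n : ℝ) ^ 2)) ^ k * rexp (-π * (n : ℝ) ^ 2 * t)‖ := by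
  simpa only [norm_psiDeriv_term] using summable_pow_mul_exp_neg_pi_mul_sq k ht

lemma hasDerivAt_psiDeriv (k : ℕ) {t : ℝ} (ht : 0 < t) :
    HasDerivAt (psiDeriv k) (psiDeriv (k + 1) t) t := by
  have ht2 : t / 2 < t := by linarith
  refine hasDerivAt_tsum_of_isPreconnected
    (g := fun (n : ℕ+) (y : ℝ) => (-(π * (n : ℝ) ^ 2)) ^ k * rexp (-π * (n : ℝ) ^ 2 * y))
    (g' := fun (n : ℕ+) (y : ℝ) => (-(π * (n : ℝ) ^ 2)) ^ (k + 1) * rexp (-π * (n : ℝ) ^ 2 * y))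
    (summable_pow_mul_exp_neg_pi_mul_sq (k + 1) (half_pos ht)) isOpen_Ioi isPreconnected_Ioi
    (fun n y _ => ?_) (fun n y hy => ?_) ht2 (summable_norm_psiDeriv_term k ht).of_norm ht2
  · refine ((((hasDerivAt_id' y).const_mul (-π * (n : ℝ) ^ 2)).exp).const_mul
      ((-(π * (n : ℝ) ^ 2)) ^ k)).congr_deriv ?_
    ring
  · rw [norm_psiDeriv_term]
    have hπn : 0 ≤ π * (n : ℝ) ^ 2 := by positivity
    gcongr _ * ?_
    exact exp_le_exp.mpr (by nlinarith [mul_le_mul_of_nonneg_left (mem_Ioi.mp hy).le hπn])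

lemma deriv_psi {t : ℝ} (ht : 0 < t) : deriv psi t = psiDeriv 1 t := by
  rw [← psiDeriv_zero]
  exact (hasDerivAt_psiDeriv 0 ht).deriv

lemma deriv_deriv_psi {t : ℝ} (ht : 0 < t) : deriv (deriv psi) t = psiDeriv 2 t := by
  have h : deriv psi =ᶠ[𝓝 t] psiDeriv 1 := by
    filter_upwards [Ioi_mem_nhds ht] with x hx using deriv_psi hx
  rw [h.deriv_eq]
  exact (hasDerivAt_psiDeriv 1 ht).deriv

lemma abs_psiDeriv_le (k : ℕ) : ∃ C, ∀ t, 1 ≤ t → |psiDeriv k t| ≤ C * rexp (-π * t) := by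
  refine ⟨rexp π * ∑' n : ℕ+, (π * (n : ℝ) ^ 2) ^ k * rexp (-π * (n : ℝ) ^ 2 * 1),
    fun t ht => ?_⟩
  have hsum := summable_pow_mul_exp_neg_pi_mul_sq k one_pos
  have ht0 : 0 < t := by linarith
  calc |psiDeriv k t|
      ≤ ∑' n : ℕ+, (π * (n : ℝ) ^ 2) ^ k * rexp (-π * (n : ℝ) ^ 2 * t) := by
        have h := norm_tsum_le_tsum_norm (summable_norm_psiDeriv_term k ht0)
        rwa [tsum_congr (norm_psiDeriv_term k · t)] at h
    _ ≤ ∑' n : ℕ+, (π * (n : ℝ) ^ 2) ^ k * rexp (-π * (n : ℝ) ^ 2 * 1) *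
          (rexp π * rexp (-π * t)) := by
        refine (summable_pow_mul_exp_neg_pi_mul_sq k ht0).tsum_le_tsum (fun n => ?_)
          (hsum.mul_right _)
        rw [mul_assoc _ (rexp _), ← Real.exp_add, ← Real.exp_add]
        gcongr
        have hn : (1 : ℝ) ≤ (n : ℝ) ^ 2 := by exact_mod_cast Nat.one_le_pow _ _ n.pos
        nlinarith [mul_nonneg (mul_nonneg pi_pos.le (sub_nonneg.2 hn)) (sub_nonneg.2 ht)]
    _ = _ := by rw [tsum_mul_right]; ring

lemma continuousOn_cpow_mul_psiDeriv (k : ℕ) (c : ℂ) :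
    ContinuousOn (fun t : ℝ => (t : ℂ) ^ c * psiDeriv k t) (Ioi 0) := fun t ht =>
  ((continuousAt_ofReal_cpow_const t c (Or.inr (ne_of_gt ht))).mul
    (continuous_ofReal.continuousAt.comp
      (hasDerivAt_psiDeriv k ht).continuousAt)).continuousWithinAt

lemma isBigO_cpow_mul_psiDeriv (k : ℕ) (c : ℂ) :
    (fun t : ℝ => (t : ℂ) ^ c * psiDeriv k t) =O[atTop] fun t => rexp (-1 * t) := by
  obtain ⟨C, hC⟩ := abs_psiDeriv_le k
  have hpow : (fun t : ℝ => t ^ c.re) =O[atTop] fun t => rexp ((π - 1) * t) :=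
    (isLittleO_rpow_exp_pos_mul_atTop c.re (by linarith [pi_gt_three])).isBigO
  have hdecay : (fun t : ℝ => t ^ c.re * (C * rexp (-π * t))) =O[atTop]
      fun t => rexp (-1 * t) := by
    refine (hpow.mul ((isBigO_refl (fun t => rexp (-π * t)) atTop).const_mul_left C)).congr_right
      fun t => ?_
    rw [← Real.exp_add]
    ring_nf
  refine IsBigO.trans (IsBigO.of_bound' ?_) hdecay
  filter_upwards [eventually_ge_atTop 1] with t ht
  have ht0 : 0 < t := by linarith
  rw [norm_mul, norm_cpow_eq_rpow_re_of_pos ht0, norm_real, Real.norm_eq_abs]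
  exact (mul_le_mul_of_nonneg_left (hC t ht) (by positivity)).trans (le_abs_self _)

lemma integrableOn_cpow_mul_psiDeriv (k : ℕ) (c : ℂ) :
    IntegrableOn (fun t : ℝ => (t : ℂ) ^ c * psiDeriv k t) (Ioi 1) :=
  (integrableOn_Ici_iff_integrableOn_Ioi (by finiteness)).mp <|
    (((continuousOn_cpow_mul_psiDeriv k c).mono (Ici_subset_Ioi.mpr one_pos)).locallyIntegrableOn
      measurableSet_Ici).integrableOn_of_isBigO_atTop (isBigO_cpow_mul_psiDeriv k c)
      ⟨Ioi 1, Ioi_mem_atTop 1, exp_neg_integrableOn_Ioi 1 one_pos⟩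

lemma tendsto_cpow_mul_psiDeriv (k : ℕ) (c : ℂ) :
    Tendsto (fun t : ℝ => (t : ℂ) ^ c * psiDeriv k t) atTop (𝓝 0) := by
  refine (isBigO_cpow_mul_psiDeriv k c).trans_tendsto ?_
  simpa using tendsto_exp_neg_atTop_nhds_zero

noncomputable def psiDerivTail (k : ℕ) (c : ℂ) : ℂ :=
  ∫ t in Ioi (1 : ℝ), (t : ℂ) ^ c * psiDeriv k t

lemma psiDerivTail_succ (k : ℕ) (c : ℂ) :
    psiDerivTail (k + 1) c = -psiDeriv k 1 - c * psiDerivTail k (c - 1) := by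
  have hderiv : ∀ t ∈ Ici (1 : ℝ), HasDerivAt (fun t : ℝ => (t : ℂ) ^ c * psiDeriv k t)
      (c * ((t : ℂ) ^ (c - 1) * psiDeriv k t) + (t : ℂ) ^ c * psiDeriv (k + 1) t) t := by
    intro t ht
    have ht0 : 0 < t := lt_of_lt_of_le one_pos ht
    have hpow := ((hasDerivAt_id' (t : ℂ)).cpow_const (c := c) (by simp [ht0])).comp_ofReal
    refine (hpow.mul (hasDerivAt_psiDeriv k ht0).ofReal_comp).congr_deriv ?_
    ring
  have hint := (integrableOn_cpow_mul_psiDeriv k (c - 1)).const_mul c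
  have hIBP := integral_Ioi_of_hasDerivAt_of_tendsto' hderiv
    (hint.add (integrableOn_cpow_mul_psiDeriv (k + 1) c)) (tendsto_cpow_mul_psiDeriv k c)
  rw [integral_add hint (integrableOn_cpow_mul_psiDeriv (k + 1) c), integral_const_mul] at hIBP
  simp only [ofReal_one, one_cpow, one_mul] at hIBP
  unfold psiDerivTail
  linear_combination hIBP

lemma evenKernel_zero_eq {t : ℝ} (ht : 0 < t) : HurwitzZeta.evenKernel 0 t = 1 + 2 * psi t := by
  have h := HurwitzZeta.evenKernel_def 0 t
  simp only [QuotientAddGroup.mk_zero, ofReal_zero, zero_mul, ← jacobiTheta_eq_jacobiTheta₂,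
    jacobiTheta_eq_tsum_nat (show 0 < (I * t).im by simpa using ht)] at h
  apply ofReal_injective
  rw [h, psi, tsum_pnat_eq_tsum_succ (f := fun m : ℕ => rexp (-π * (m : ℝ) ^ 2 * t))]
  push_cast
  simp only [zero_pow two_ne_zero, mul_zero, zero_mul, Complex.exp_zero, one_mul]
  congr 3 with n
  congr 1
  linear_combination (π * ((n : ℂ) + 1) ^ 2 * t) * I_sq

lemma one_add_two_mul_psi_inv {t : ℝ} (ht : 0 < t) :
    1 + 2 * psi t⁻¹ = √t * (1 + 2 * psi t) := by
  have h := HurwitzZeta.evenKernel_functional_equation 0 t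
  rw [← HurwitzZeta.evenKernel_eq_cosKernel_of_zero, one_div t, evenKernel_zero_eq ht,
    evenKernel_zero_eq (inv_pos.mpr ht), ← Real.sqrt_eq_rpow] at h
  have hsqrt : 0 < √t := Real.sqrt_pos.mpr ht
  field_simp at h
  rw [one_div] at h
  linear_combination -h

lemma four_mul_psiDeriv_one_one_add_psiDeriv_zero_one :
    4 * psiDeriv 1 1 + psiDeriv 0 1 = -1 / 2 := by
  have hψ := psiDeriv_zero ▸ hasDerivAt_psiDeriv 0 one_pos
  have hleft : HasDerivAt (fun x : ℝ => 1 + 2 * psi x⁻¹) (2 * (psiDeriv 1 1 * -1)) 1 := by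
    have hinv : HasDerivAt (fun x : ℝ => x⁻¹) (-1) 1 := by
      simpa using hasDerivAt_inv (x := (1 : ℝ)) one_ne_zero
    have hψ' : HasDerivAt psi (psiDeriv 1 1) 1⁻¹ := by rwa [inv_one]
    exact ((hψ'.comp 1 hinv).const_mul 2).const_add 1
  have hright : HasDerivAt (fun x : ℝ => √x * (1 + 2 * psi x))
      (1 / 2 * (1 + 2 * psi 1) + √1 * (2 * psiDeriv 1 1)) 1 := by
    have hsqrt : HasDerivAt Real.sqrt (1 / 2) 1 := by
      simpa using Real.hasDerivAt_sqrt one_ne_zero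
    exact hsqrt.mul ((hψ.const_mul 2).const_add 1)
  have heq : (fun x : ℝ => 1 + 2 * psi x⁻¹) =ᶠ[𝓝 1] fun x => √x * (1 + 2 * psi x) := by
    filter_upwards [Ioi_mem_nhds one_pos] with x hx using one_add_two_mul_psi_inv hx
  have h := hleft.unique (hright.congr_of_eventuallyEq heq)
  rw [Real.sqrt_one, ← psiDeriv_zero] at h
  linarith

lemma hurwitzEvenFEPair_zero_f_modif {t : ℝ} (ht : 1 < t) :
    (HurwitzZeta.hurwitzEvenFEPair 0).f_modif t = 2 * psi t := by
  simp [WeakFEPair.f_modif, HurwitzZeta.hurwitzEvenFEPair, ht, notMem_Ioo_of_ge ht.le,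
    evenKernel_zero_eq (by linarith : (0 : ℝ) < t)]

lemma hurwitzEvenFEPair_zero_f_modif_inv {t : ℝ} (ht : 0 < t) :
    (HurwitzZeta.hurwitzEvenFEPair 0).f_modif t⁻¹ =
      (t : ℂ) ^ (1 / 2 : ℂ) * (HurwitzZeta.hurwitzEvenFEPair 0).f_modif t := by
  have h := (HurwitzZeta.hurwitzEvenFEPair 0).hf_modif_FE t ht
  rw [show (HurwitzZeta.hurwitzEvenFEPair 0).g_modif =
      (HurwitzZeta.hurwitzEvenFEPair 0).symm.f_modif from rfl,
    HurwitzZeta.hurwitzEvenFEPair_zero_symm, one_div] at h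
  rw [h]
  simp [HurwitzZeta.hurwitzEvenFEPair, ofReal_cpow ht.le]

lemma completedRiemannZeta₀_eq_psiDerivTail (s : ℂ) :
    completedRiemannZeta₀ s = psiDerivTail 0 (s / 2 - 1) + psiDerivTail 0 ((1 - s) / 2 - 1) := by
  have hconv : MellinConvergent (HurwitzZeta.hurwitzEvenFEPair 0).f_modif (s / 2) :=
    ((HurwitzZeta.hurwitzEvenFEPair 0).isStrongFEPair_toStrongFEPair.hasMellin (s / 2)).1
  have hlarge : ∫ t in Ioi (1 : ℝ), (t : ℂ) ^ (s / 2 - 1) •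
      (HurwitzZeta.hurwitzEvenFEPair 0).f_modif t = 2 * psiDerivTail 0 (s / 2 - 1) := by
    rw [psiDerivTail, ← integral_const_mul]
    refine setIntegral_congr_fun measurableSet_Ioi fun t (ht : 1 < t) => ?_
    rw [hurwitzEvenFEPair_zero_f_modif ht, psiDeriv_zero, smul_eq_mul]
    ring
  have hsmall : ∫ t in Ioi (1 : ℝ), (t : ℂ) ^ (-(s / 2) - 1) •
      (HurwitzZeta.hurwitzEvenFEPair 0).f_modif t⁻¹ = 2 * psiDerivTail 0 ((1 - s) / 2 - 1) := by
    rw [psiDerivTail, ← integral_const_mul]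
    refine setIntegral_congr_fun measurableSet_Ioi fun t (ht : 1 < t) => ?_
    have ht0 : 0 < t := by linarith
    rw [hurwitzEvenFEPair_zero_f_modif_inv ht0, hurwitzEvenFEPair_zero_f_modif ht, psiDeriv_zero,
      smul_eq_mul, show (1 - s) / 2 - 1 = -(s / 2) - 1 + 1 / 2 by ring,
      cpow_add _ _ (ofReal_ne_zero.mpr ht0.ne')]
    ring
  change mellin (HurwitzZeta.hurwitzEvenFEPair 0).f_modif (s / 2) / 2 = _
  rw [mellin_eq_integral_Ioi_one_add hconv, hlarge, hsmall]
  ring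

lemma cpow_mul_psiDeriv_combination {t : ℝ} (ht : 0 < t) (c : ℂ) :
    (t : ℂ) ^ c * ((t * psiDeriv 2 t + 3 / 2 * psiDeriv 1 t : ℝ) : ℂ) =
      (t : ℂ) ^ (c + 1) * psiDeriv 2 t + 3 / 2 * ((t : ℂ) ^ c * psiDeriv 1 t) := by
  rw [cpow_add _ _ (ofReal_ne_zero.mpr ht.ne'), cpow_one]
  push_cast
  ring

lemma integrableOn_cpow_mul_psiDeriv_combination (c : ℂ) :
    IntegrableOn (fun t : ℝ => (t : ℂ) ^ c * ((t * psiDeriv 2 t + 3 / 2 * psiDeriv 1 t : ℝ) : ℂ))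
      (Ioi 1) :=
  ((integrableOn_cpow_mul_psiDeriv 2 (c + 1)).add
    ((integrableOn_cpow_mul_psiDeriv 1 c).const_mul (3 / 2))).congr_fun
    (fun t (ht : 1 < t) => (cpow_mul_psiDeriv_combination (by linarith) c).symm) measurableSet_Ioi

lemma integral_cpow_mul_psiDeriv_combination (c : ℂ) :
    ∫ t in Ioi (1 : ℝ), (t : ℂ) ^ c * ((t * psiDeriv 2 t + 3 / 2 * psiDeriv 1 t : ℝ) : ℂ) =
      -psiDeriv 1 1 - (1 / 2 - c) * psiDeriv 0 1 - c * (1 / 2 - c) * psiDerivTail 0 (c - 1) := by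
  rw [setIntegral_congr_fun measurableSet_Ioi
      fun t (ht : 1 < t) => cpow_mul_psiDeriv_combination (by linarith) c,
    integral_add (integrableOn_cpow_mul_psiDeriv 2 (c + 1))
      ((integrableOn_cpow_mul_psiDeriv 1 c).const_mul (3 / 2)), integral_const_mul]
  change psiDerivTail 2 (c + 1) + 3 / 2 * psiDerivTail 1 c = _
  rw [psiDerivTail_succ 1, add_sub_cancel_right, psiDerivTail_succ 0]
  ring

lemma two_mul_rpow_mul_cos {t : ℝ} (ht : 0 < t) (τ : ℝ) :
    2 * ((t ^ (1 / 4 : ℝ) * Real.cos (τ / 2 * Real.log t) : ℝ) : ℂ) =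
      (t : ℂ) ^ ((1 / 2 + I * τ) / 2) + (t : ℂ) ^ ((1 - (1 / 2 + I * τ)) / 2) := by
  have ht0 : (t : ℂ) ≠ 0 := ofReal_ne_zero.mpr ht.ne'
  rw [cpow_def_of_ne_zero ht0, cpow_def_of_ne_zero ht0, ← ofReal_log ht.le,
    Real.rpow_def_of_pos ht, ofReal_mul, ofReal_exp, ofReal_cos, Complex.cos]
  push_cast
  rw [show (Real.log t : ℂ) * ((1 / 2 + I * τ) / 2) =
      Real.log t * (1 / 4) + τ / 2 * Real.log t * I by ring,
    show (Real.log t : ℂ) * ((1 - (1 / 2 + I * τ)) / 2) =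
      Real.log t * (1 / 4) + -(τ / 2 * Real.log t) * I by ring, Complex.exp_add, Complex.exp_add]
  ring

lemma ofReal_integral_rpow_mul_cos_mul (τ : ℝ) {G : ℝ → ℝ}
    (h₁ : IntegrableOn (fun t : ℝ => (t : ℂ) ^ ((1 / 2 + I * τ) / 2) * G t) (Ioi 1))
    (h₂ : IntegrableOn (fun t : ℝ => (t : ℂ) ^ ((1 - (1 / 2 + I * τ)) / 2) * G t) (Ioi 1)) :
    ((∫ t in Ioi (1 : ℝ), t ^ (1 / 4 : ℝ) * Real.cos (τ / 2 * Real.log t) * G t : ℝ) : ℂ) =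
      ((∫ t in Ioi (1 : ℝ), (t : ℂ) ^ ((1 / 2 + I * τ) / 2) * G t) +
        ∫ t in Ioi (1 : ℝ), (t : ℂ) ^ ((1 - (1 / 2 + I * τ)) / 2) * G t) / 2 := by
  rw [← integral_complex_ofReal, ← integral_add h₁ h₂, ← integral_div]
  refine setIntegral_congr_fun measurableSet_Ioi fun t (ht : 1 < t) => ?_
  rw [← add_mul, ← two_mul_rpow_mul_cos (by linarith : (0 : ℝ) < t)]
  push_cast
  ring

lemma xi_eq_completedRiemannZeta₀ {s : ℂ} (hs0 : s ≠ 0) (hs1 : s ≠ 1) (hre : 0 < s.re) :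
    xi s = 1 / 2 + s * (s - 1) / 2 * completedRiemannZeta₀ s := by
  have hΓℝ : Gammaℝ s ≠ 0 := Gammaℝ_ne_zero_of_re_pos hre
  rw [Gammaℝ_def] at hΓℝ
  have hΓ : Gamma (s / 2) ≠ 0 := right_ne_zero_of_mul hΓℝ
  have hsub : 1 - s ≠ 0 := sub_ne_zero.mpr hs1.symm
  rw [xi, add_comm 1, Gamma_add_one _ (div_ne_zero hs0 two_ne_zero),
    riemannZeta_def_of_ne_zero hs0, completedRiemannZeta_eq, Gammaℝ_def]
  field_simp
  ring

end RiemannXi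

open RiemannXi in
theorem Xi_psi_derivative_rep (τ : ℝ) :
    xi (1 / 2 + I * τ) = 4 *
      ((∫ t in Ioi (1 : ℝ), t ^ ((1 : ℝ) / 4) * Real.cos (τ / 2 * Real.log t) *
        (t * deriv (deriv psi) t + 3 / 2 * deriv psi t) : ℝ) : ℂ) := by
  set s : ℂ := 1 / 2 + I * τ with hs
  have hre : s.re = 1 / 2 := by simp [s]
  have hs0 : s ≠ 0 := fun h => by simp [h] at hre
  have hs1 : s ≠ 1 := fun h => by norm_num [h] at hre
  have hderivs : ∀ t ∈ Ioi (1 : ℝ), t ^ ((1 : ℝ) / 4) * Real.cos (τ / 2 * Real.log t) *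
      (t * deriv (deriv psi) t + 3 / 2 * deriv psi t) = t ^ ((1 : ℝ) / 4) *
        Real.cos (τ / 2 * Real.log t) * (t * psiDeriv 2 t + 3 / 2 * psiDeriv 1 t) :=
    fun t (ht : 1 < t) => by rw [deriv_psi (by linarith), deriv_deriv_psi (by linarith)]
  rw [setIntegral_congr_fun measurableSet_Ioi hderivs, ofReal_integral_rpow_mul_cos_mul τ
      (integrableOn_cpow_mul_psiDeriv_combination _)
      (integrableOn_cpow_mul_psiDeriv_combination _),
    integral_cpow_mul_psiDeriv_combination, integral_cpow_mul_psiDeriv_combination,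
    xi_eq_completedRiemannZeta₀ hs0 hs1 (by rw [hre]; norm_num),
    completedRiemannZeta₀_eq_psiDerivTail]
  have hψ := congrArg ((↑) : ℝ → ℂ) four_mul_psiDeriv_one_one_add_psiDeriv_zero_one
  push_cast at hψ
  rw [← hs]
  linear_combination hψ
end
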